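/- arXiv:1301.1380 — 3 statements merged into one kernel-verified Lean document; each statement's English description precedes it below -/
import Mathlib

section
/- Let {T₁, …, Tₙ} be similarity contractions Tₖ(z) = pₖ + φₖ(z − pₖ) with 0 < |φₖ| < 1, let a = (a(1), …, a(L)) ∈ {1, …, n}^L be an address with composed map T_a = T_{a(1)} ∘ ⋯ ∘ T_{a(L)}, let p ∈ ℂ, and let c ∈ ℂ with q_c = −2π·Re c and Γ_c = 2π·Im c. Let ψ_{c,p}(z) = (q_c/2π)·Arg(z − p) + (Γ_c/2π)·ln|z − p| be the eddy with character c centered at p. Then for every z such that T_a⁻¹(z) − p is not a nonpositive real number, the pushforward ψ_{c,p} ∘ T_a⁻¹ is differentiable at z in the ℝ² sense and i∇(ψ_{c,p} ∘ T_a⁻¹)(z) = c·(z − T_a(p))/|z − T_a(p)|². That is, at the level of velocity fields, the pushforward of the eddy at p along the address a is the eddy with the same character c centered at T_a(p). -/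
/-! `T_a⁻¹`, a composition of complex affine maps, has the form `w ↦ Φ w + β` and sends
`T_a p` to `p`, so `T_a⁻¹ w - p = Φ (w - T_a p)`. The eddy `ψ_{c,p}` is the real part of
`i c̄ log (z - p)`, hence `ψ_{c,p} ∘ T_a⁻¹ = Re (i c̄ log (Φ (w - T_a p)))`; the factor `Φ` is
killed by differentiating the logarithm. The gradient of the real part of a holomorphic function
is the conjugate of its derivative, and `i · conj (i c̄ / u) = c / ū = c u / |u|²`. -/

/-- The gradient of `ψ : ℂ → ℝ` at `z`, viewed as the complex number `∂₁ψ + i·∂₂ψ`. -/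
noncomputable def grad (ψ : ℂ → ℝ) (z : ℂ) : ℂ :=
  ((fderiv ℝ ψ z 1 : ℝ) : ℂ) + ((fderiv ℝ ψ z Complex.I : ℝ) : ℂ) * Complex.I

open Complex Function ComplexConjugate

namespace List

theorem foldr_comp_eq_comp {α : Type*} (l : List (α → α)) (g : α → α) :
    l.foldr (· ∘ ·) g = l.foldr (· ∘ ·) id ∘ g := by
  induction l with
  | nil => rfl
  | cons f l ih => simp only [foldr_cons, ih, comp_assoc]

theorem leftInverse_foldr_comp_reverse {α ι : Type*} {f g : ι → α → α}
    (h : ∀ i, LeftInverse (g i) (f i)) (l : List ι) :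
    LeftInverse ((l.map g).reverse.foldr (· ∘ ·) id) ((l.map f).foldr (· ∘ ·) id) := by
  induction l with
  | nil => exact fun _ => rfl
  | cons i l ih =>
    intro x
    simp only [map_cons, reverse_cons, foldr_append, foldr_cons, foldr_nil,
      foldr_comp_eq_comp _ (g i ∘ id), comp_apply, id_eq, h i _, ih x]

theorem exists_foldr_comp_sub_eq_mul {R : Type*} [CommRing R] (l : List (R → R))
    (hl : ∀ f ∈ l, ∃ Φ : R, ∀ z w, f z - f w = Φ * (z - w)) :
    ∃ Φ : R, ∀ z w, l.foldr (· ∘ ·) id z - l.foldr (· ∘ ·) id w = Φ * (z - w) := by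
  induction l with
  | nil => exact ⟨1, fun z w => by simp⟩
  | cons f l ih =>
    obtain ⟨Φf, hf⟩ := hl f mem_cons_self
    obtain ⟨Φ, hΦ⟩ := ih fun g hg => hl g (mem_cons_of_mem f hg)
    exact ⟨Φf * Φ, fun z w => by simp only [foldr_cons, comp_apply, hf, hΦ, mul_assoc]⟩

end List

theorem grad_re_of_hasDerivAt {f : ℂ → ℂ} {f' z : ℂ} (hf : HasDerivAt f f' z) :
    DifferentiableAt ℝ (fun w => (f w).re) z ∧ grad (fun w => (f w).re) z = conj f' := by
  have hre : HasFDerivAt (fun w => (f w).re)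
      (reCLM.comp ((ContinuousLinearMap.toSpanSingleton ℂ f').restrictScalars ℝ)) z :=
    reCLM.hasFDerivAt.comp z (hf.hasFDerivAt.restrictScalars ℝ)
  refine ⟨hre.differentiableAt, ?_⟩
  apply Complex.ext <;> simp [grad, hre.fderiv]

theorem neg_re_mul_arg_add_im_mul_log_norm (c w : ℂ) :
    -c.re * w.arg + c.im * Real.log ‖w‖ = (I * conj c * log w).re := by
  rw [← log_re, ← log_im]
  simp only [mul_re, mul_im, I_re, I_im, conj_re, conj_im]
  ring

theorem hasDerivAt_log_mul_sub {Φ q z : ℂ} (hz : Φ * (z - q) ∈ slitPlane) :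
    HasDerivAt (fun w => log (Φ * (w - q))) (z - q)⁻¹ z := by
  have hΦ : Φ ≠ 0 := left_ne_zero_of_mul (slitPlane_ne_zero hz)
  exact ((hasDerivAt_log hz).comp z (((hasDerivAt_id z).sub_const q).const_mul Φ)).congr_deriv
    (by rw [mul_one, mul_inv_rev, mul_assoc, inv_mul_cancel₀ hΦ, mul_one])

theorem I_mul_conj_I_mul_conj_mul_inv (c u : ℂ) :
    I * conj (I * conj c * u⁻¹) = c * u / (‖u‖ : ℂ) ^ 2 := by
  rcases eq_or_ne u 0 with rfl | hu
  · simp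
  rw [← mul_conj', map_mul, map_mul, map_inv₀, conj_I, conj_conj]
  have hu' : conj u ≠ 0 := (map_ne_zero _).mpr hu
  field_simp
  linear_combination -c * I_sq

/-- the pushforward along an address `a ∈ {1,…,n}^L` of the eddy
`ψ_{c,p}(z) = (q_c/2π)·Arg(z − p) + (Γ_c/2π)·ln|z − p|` (with `q_c = −2π·Re c`,
`Γ_c = 2π·Im c`) is, at the level of velocity fields, the eddy with the same character `c`
centered at `T_a(p)`: away from the branch cut,
`i∇(ψ_{c,p} ∘ T_a⁻¹)(z) = c·(z − T_a(p))/|z − T_a(p)|²`.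
Here `T_a = T_{a(1)} ∘ ⋯ ∘ T_{a(L)}` and `T_a⁻¹ = T_{a(L)}⁻¹ ∘ ⋯ ∘ T_{a(1)}⁻¹`. -/
theorem address_pushforward_eddy
    (n : ℕ) (pfix φ : Fin n → ℂ)
    (hφ : ∀ k, 0 < ‖φ k‖ ∧ ‖φ k‖ < 1)
    (T : Fin n → ℂ → ℂ) (hT : ∀ k z, T k z = pfix k + φ k * (z - pfix k))
    (Tinv : Fin n → ℂ → ℂ) (hTinv : ∀ k z, Tinv k z = pfix k + (z - pfix k) / φ k)
    (L : ℕ) (a : Fin L → Fin n)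
    (Ta TaInv : ℂ → ℂ)
    (hTa : Ta = (List.ofFn fun i => T (a i)).foldr (· ∘ ·) id)
    (hTaInv : TaInv = ((List.ofFn fun i => Tinv (a i)).reverse).foldr (· ∘ ·) id)
    (c p : ℂ) (qc Γc : ℝ)
    (hq : qc = -2 * Real.pi * c.re) (hΓ : Γc = 2 * Real.pi * c.im)
    (ψ : ℂ → ℝ)
    (hψ : ∀ z, ψ z = qc / (2 * Real.pi) * (z - p).arg
        + Γc / (2 * Real.pi) * Real.log (‖z - p‖))
    (z : ℂ) (hz : TaInv z - p ∈ Complex.slitPlane) :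
    DifferentiableAt ℝ (ψ ∘ TaInv) z ∧
      Complex.I * grad (ψ ∘ TaInv) z
        = c * (z - Ta p) / ((‖z - Ta p‖ : ℂ)) ^ 2 := by
  have hleft : ∀ k, LeftInverse (Tinv k) (T k) := fun k w => by
    rw [hT, hTinv]
    field_simp [norm_pos_iff.mp (hφ k).1]
    ring
  have hinv : LeftInverse TaInv Ta := by
    have := List.leftInverse_foldr_comp_reverse hleft (List.ofFn a)
    simp only [List.map_ofFn] at this
    rwa [hTa, hTaInv]
  obtain ⟨Φ, hΦ⟩ : ∃ Φ : ℂ, ∀ z w, TaInv z - TaInv w = Φ * (z - w) := by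
    rw [hTaInv]
    refine List.exists_foldr_comp_sub_eq_mul _ ?_
    simp only [List.mem_reverse, List.mem_ofFn, forall_exists_index]
    rintro _ i rfl
    exact ⟨(φ (a i))⁻¹, fun z w => by rw [hTinv, hTinv]; ring⟩
  have hshift : ∀ w, TaInv w - p = Φ * (w - Ta p) := fun w => by
    simpa only [hinv p] using hΦ w (Ta p)
  have hψ' : ψ ∘ TaInv = fun w => (I * conj c * log (Φ * (w - Ta p))).re := by
    funext w
    rw [comp_apply, hψ, hshift, ← neg_re_mul_arg_add_im_mul_log_norm, hq, hΓ]
    simp only [neg_mul, neg_div, mul_div_cancel_left₀ _ Real.two_pi_pos.ne']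
  rw [hshift] at hz
  obtain ⟨hd, hgrad⟩ :=
    grad_re_of_hasDerivAt ((hasDerivAt_log_mul_sub hz).const_mul (I * conj c))
  rw [hψ', hgrad, I_mul_conj_I_mul_conj_mul_inv]
  exact ⟨hd, rfl⟩
end

section
/- Let {T₁, …, Tₙ} be similarity contractions Tₖ(z) = pₖ + φₖ(z − pₖ) with 0 < |φₖ| < 1, and weights wₖ ∈ (0,1) with Σₖ wₖ = 1. Let v : ℂ → ℂ have character c ∈ ℂ (with respect to some, equivalently every, base point). Define the transferred velocity field w(z) = Σₖ wₖ·(φₖ/|φₖ|²)·v(Tₖ⁻¹(z)). Then w also has character c. That is, character is invariant under weighted transfer. -/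
/-! The transfer of a single contraction `z ↦ p + φ (z - p)` multiplies `v ∘ T⁻¹` by
`φ / |φ|² = (conj φ)⁻¹`, which exactly cancels the factor `conj φ` picked up by `conj (z - p)`
under the substitution `z - p = φ (ζ - p)`; so it preserves the character at its fixed point.
Characters do not depend on the base point and are linear in the field, so the weighted sum
has character `(∑ₖ wₖ) c = c`. -/

open Filter

/-- `v : ℂ → ℂ` has character `c` with respect to base point `p`: for every sequence
`(z_j)` with `|z_j − p| → ∞` one has `v(z_j)·conj(z_j − p) → c`. -/
def HasChar (v : ℂ → ℂ) (p c : ℂ) : Prop :=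
  ∀ z : ℕ → ℂ, Tendsto (fun j => ‖z j - p‖) atTop atTop →
    Tendsto (fun j => v (z j) * (starRingEnd ℂ) (z j - p)) atTop (nhds c)

lemma tendsto_norm_sub_atTop_of_tendsto_norm_sub_atTop {z : ℕ → ℂ} {p : ℂ} (q : ℂ)
    (hz : Tendsto (fun j => ‖z j - p‖) atTop atTop) :
    Tendsto (fun j => ‖z j - q‖) atTop atTop := by
  refine tendsto_atTop_mono (fun j => ?_) (tendsto_atTop_add_const_right atTop (-‖q - p‖) hz)
  linarith [norm_sub_le_norm_sub_add_norm_sub (z j) q p]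

namespace HasChar

variable {v : ℂ → ℂ} {p c : ℂ}

lemma tendsto_zero (hv : HasChar v p c) {z : ℕ → ℂ}
    (hz : Tendsto (fun j => ‖z j - p‖) atTop atTop) :
    Tendsto (fun j => v (z j)) atTop (nhds 0) := by
  have hinv : Tendsto (fun j => ((starRingEnd ℂ) (z j - p))⁻¹) atTop (nhds 0) := by
    rw [tendsto_zero_iff_norm_tendsto_zero]
    simp only [norm_inv, Complex.norm_conj]
    exact hz.inv_tendsto_atTop
  refine (mul_zero c ▸ (hv z hz).mul hinv).congr' ?_
  filter_upwards [hz.eventually_gt_atTop 0] with j hj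
  have hne : (starRingEnd ℂ) (z j - p) ≠ 0 := by
    rw [map_ne_zero, ← norm_pos_iff]
    exact hj
  rw [mul_assoc, mul_inv_cancel₀ hne, mul_one]

lemma of_base (hv : HasChar v p c) (q : ℂ) : HasChar v q c := by
  intro z hz
  have hzp := tendsto_norm_sub_atTop_of_tendsto_norm_sub_atTop p hz
  have hsum := (hv z hzp).add ((hv.tendsto_zero hzp).mul_const ((starRingEnd ℂ) (p - q)))
  rw [zero_mul, add_zero] at hsum
  refine hsum.congr fun j => ?_
  rw [← mul_add, ← map_add, sub_add_sub_cancel]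

lemma const_mul (hv : HasChar v p c) (a : ℂ) : HasChar (fun z => a * v z) p (a * c) :=
  fun z hz => by simpa only [mul_assoc] using (hv z hz).const_mul a

lemma sum {ι : Type*} (s : Finset ι) {f : ι → ℂ → ℂ} {c : ι → ℂ}
    (hf : ∀ i ∈ s, HasChar (f i) p (c i)) :
    HasChar (fun z => ∑ i ∈ s, f i z) p (∑ i ∈ s, c i) :=
  fun z hz => by simpa only [Finset.sum_mul] using tendsto_finsetSum s fun i hi => hf i hi z hz

lemma transfer (hv : HasChar v p c) {φ : ℂ} (hφ : φ ≠ 0) :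
    HasChar (fun z => φ / (‖φ‖ : ℂ) ^ 2 * v (p + (z - p) / φ)) p c := by
  intro z hz
  have hζ : Tendsto (fun j => ‖p + (z j - p) / φ - p‖) atTop atTop := by
    simpa only [add_sub_cancel_left, norm_div] using hz.atTop_div_const (norm_pos_iff.2 hφ)
  refine (hv _ hζ).congr fun j => ?_
  have hcancel : φ / (‖φ‖ : ℂ) ^ 2 * (starRingEnd ℂ) φ = 1 := by
    rw [← Complex.mul_conj']
    field_simp [(map_ne_zero (starRingEnd ℂ)).2 hφ]
  calc v (p + (z j - p) / φ) * (starRingEnd ℂ) (p + (z j - p) / φ - p)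
      = φ / (‖φ‖ : ℂ) ^ 2 * (starRingEnd ℂ) φ * v (p + (z j - p) / φ)
          * (starRingEnd ℂ) ((z j - p) / φ) := by rw [hcancel, one_mul, add_sub_cancel_left]
    _ = φ / (‖φ‖ : ℂ) ^ 2 * v (p + (z j - p) / φ) * (starRingEnd ℂ) (z j - p) := by
      rw [map_div₀]
      field_simp [(map_ne_zero (starRingEnd ℂ)).2 hφ]

end HasChar

theorem char_invariant_under_transfer_general
    (n : ℕ) (pfix φ : Fin n → ℂ)
    (hφ : ∀ k, 0 < ‖φ k‖ ∧ ‖φ k‖ < 1)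
    (w : Fin n → ℝ) (hsum : ∑ k, w k = 1)
    (Tinv : Fin n → ℂ → ℂ) (hTinv : ∀ k z, Tinv k z = pfix k + (z - pfix k) / φ k)
    (v : ℂ → ℂ) (c : ℂ) (hv : ∀ p, HasChar v p c)
    (W : ℂ → ℂ)
    (hW : ∀ z, W z = ∑ k, (w k : ℂ) * (φ k / ((‖φ k‖ : ℂ)) ^ 2) * v (Tinv k z)) :
    ∀ p, HasChar W p c := by
  intro p
  have hterm : ∀ k ∈ Finset.univ, HasChar
      (fun z => (w k : ℂ) * (φ k / ((‖φ k‖ : ℂ)) ^ 2 * v (Tinv k z))) p (w k * c) := by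
    intro k _
    simp only [hTinv]
    exact (((hv (pfix k)).transfer (norm_pos_iff.1 (hφ k).1)).of_base p).const_mul _
  have hweights : ∑ k, (w k : ℂ) * c = c := by
    rw [← Finset.sum_mul, ← Complex.ofReal_sum, hsum, Complex.ofReal_one, one_mul]
  obtain rfl : W = _ := funext hW
  simpa only [hweights, mul_assoc] using HasChar.sum Finset.univ hterm

/-- character is invariant under the weighted transfer of velocity fields.
If `v` has character `c` (with respect to every base point), then the transferred field
`w(z) = Σₖ wₖ·(φₖ/|φₖ|²)·v(Tₖ⁻¹(z))` of an IFS of similarity contractions with weights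
also has character `c` (with respect to every base point). -/
theorem char_invariant_under_transfer
    (n : ℕ) (pfix φ : Fin n → ℂ)
    (hφ : ∀ k, 0 < ‖φ k‖ ∧ ‖φ k‖ < 1)
    (w : Fin n → ℝ) (hw : ∀ k, w k ∈ Set.Ioo (0 : ℝ) 1) (hsum : ∑ k, w k = 1)
    (T : Fin n → ℂ → ℂ) (hT : ∀ k z, T k z = pfix k + φ k * (z - pfix k))
    (Tinv : Fin n → ℂ → ℂ) (hTinv : ∀ k z, Tinv k z = pfix k + (z - pfix k) / φ k)
    (v : ℂ → ℂ) (c : ℂ) (hv : ∀ p, HasChar v p c)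
    (W : ℂ → ℂ)
    (hW : ∀ z, W z = ∑ k, (w k : ℂ) * (φ k / ((‖φ k‖ : ℂ)) ^ 2) * v (Tinv k z)) :
    ∀ p, HasChar W p c :=
  char_invariant_under_transfer_general n pfix φ hφ w hsum Tinv hTinv v c hv W hW
end

section
/- Let v : ℂ → ℂ be continuous and have character c ∈ ℂ (with respect to some, equivalently every, base point). Let ρ : ℝ² → ℝ be a nonnegative, compactly supported, integrable function with ∫_{ℝ²} ρ = 1 (a compactly supported probability density). Define the convolution (v ∗ ρ)(z) = ∫_{ℝ²} v(z − w)·ρ(w) dw. Then v ∗ ρ also has character c. That is, character is invariant under convolution with a compactly supported probability density. -/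
/-!
The character condition says `v x * conj (x - p) → c` as `x` leaves every bounded set, so
`‖v x‖ * ‖x - p‖` is bounded far from `p`. As `ρ` has compact support, only translates `x - w`
with `w` bounded enter the convolution; these are comparably far from `p`, so the integrands
`ρ w • (v (x - w) * conj (x - p))` are dominated by a multiple of `‖ρ‖`. Each of them tends to
`ρ w • c`, because `v` also has character `c` with respect to the base point `p - w`, and dominated
convergence gives the limit `(∫ ρ) • c = c`.
-/

open Filter MeasureTheory

open Bornology Topology

instance Metric.isCountablyGenerated_cobounded {α : Type*} [PseudoMetricSpace α] [Nonempty α] :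
    (cobounded α).IsCountablyGenerated := by
  rw [← Metric.comap_dist_right_atTop (Classical.arbitrary α)]
  infer_instance

theorem hasChar_iff_tendsto_cobounded {v : ℂ → ℂ} {p c : ℂ} :
    HasChar v p c ↔
      Tendsto (fun x => v x * starRingEnd ℂ (x - p)) (cobounded ℂ) (𝓝 c) := by
  simp only [HasChar, ← dist_eq_norm, Metric.tendsto_dist_right_atTop_iff]
  exact (tendsto_iff_seq_tendsto (f := fun x => v x * starRingEnd ℂ (x - p))
    (k := cobounded ℂ)).symm

theorem HasChar.comp_sub_const {v : ℂ → ℂ} {p c : ℂ} (w : ℂ) (h : HasChar v (p - w) c) :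
    HasChar (fun x => v (x - w)) p c := by
  rw [hasChar_iff_tendsto_cobounded] at h ⊢
  simpa only [Function.comp_def, sub_sub_sub_cancel_right] using
    h.comp (tendsto_sub_const_cobounded w)

theorem HasChar.exists_norm_mul_le {v : ℂ → ℂ} {p c : ℂ} (h : HasChar v p c) :
    ∃ M R : ℝ, ∀ x, R ≤ ‖x - p‖ → ‖v x‖ * ‖x - p‖ ≤ M := by
  have hle := (hasChar_iff_tendsto_cobounded.1 h).norm.eventually
    (eventually_le_nhds (lt_add_one ‖c‖))
  rw [← Metric.comap_dist_right_atTop p, (atTop_basis.comap _).eventually_iff] at hle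
  obtain ⟨R, -, hR⟩ := hle
  refine ⟨‖c‖ + 1, R, fun x hx => ?_⟩
  simpa only [norm_mul, Complex.norm_conj] using hR (by simpa [dist_eq_norm] using hx)

theorem norm_comp_sub_mul_norm_sub_le {E F : Type*} [SeminormedAddCommGroup E]
    [SeminormedAddCommGroup F] {v : E → F} {p q w : E} {M R K : ℝ}
    (hM : ∀ x, R ≤ ‖x - p‖ → ‖v x‖ * ‖x - p‖ ≤ M) (hw : ‖w‖ ≤ K)
    (hqK : 2 * K ≤ ‖q - p‖) (hqR : R + K ≤ ‖q - p‖) :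
    ‖v (q - w)‖ * ‖q - p‖ ≤ 2 * M := by
  have hshift : ‖q - p‖ - K ≤ ‖q - w - p‖ := by
    have := norm_sub_norm_le (q - p) w
    rw [sub_right_comm] at this
    linarith
  calc ‖v (q - w)‖ * ‖q - p‖ ≤ ‖v (q - w)‖ * (2 * ‖q - w - p‖) := by gcongr; linarith
    _ = 2 * (‖v (q - w)‖ * ‖q - w - p‖) := by ring
    _ ≤ 2 * M := by gcongr; exact hM _ (by linarith)

theorem char_invariant_under_convolution_general
    (v : ℂ → ℂ) (hv : Continuous v) (c : ℂ) (hchar : ∀ p, HasChar v p c)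
    (ρ : ℂ → ℝ) (hρcs : HasCompactSupport ρ)
    (hρint : Integrable ρ) (hρ1 : (∫ w : ℂ, ρ w) = 1)
    (vρ : ℂ → ℂ) (hvρ : ∀ z, vρ z = ∫ w : ℂ, ρ w • v (z - w)) :
    ∀ p, HasChar vρ p c := by
  intro p
  obtain ⟨M, R, hM⟩ := (hchar p).exists_norm_mul_le
  obtain ⟨K, hK⟩ := hρcs.isCompact.isBounded.subset_closedBall 0
  have hfar : ∀ᶠ x in cobounded ℂ, 2 * K ≤ ‖x - p‖ ∧ R + K ≤ ‖x - p‖ := by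
    have := (Metric.tendsto_dist_right_cobounded_atTop p).eventually
      ((eventually_ge_atTop (2 * K)).and (eventually_ge_atTop (R + K)))
    simpa only [dist_eq_norm] using this
  have hconv (x : ℂ) : vρ x * starRingEnd ℂ (x - p) =
      ∫ w, ρ w • (v (x - w) * starRingEnd ℂ (x - p)) := by
    simp only [hvρ, ← integral_mul_const, smul_mul_assoc]
  rw [hasChar_iff_tendsto_cobounded, ← one_smul ℝ c, ← hρ1, ← integral_smul_const]
  simp only [hconv]
  refine tendsto_integral_filter_of_dominated_convergence (fun w => ‖ρ w‖ * (2 * M))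
    (.of_forall fun x =>
      hρint.aestronglyMeasurable.smul (by fun_prop : Continuous _).aestronglyMeasurable)
    (hfar.mono fun x hx => .of_forall fun w => ?_) (hρint.norm.mul_const _)
    (.of_forall fun w => ?_)
  · rw [norm_smul, norm_mul, Complex.norm_conj]
    by_cases hw : w ∈ tsupport ρ
    · have hwK : ‖w‖ ≤ K := by simpa using hK hw
      exact mul_le_mul_of_nonneg_left (norm_comp_sub_mul_norm_sub_le hM hwK hx.1 hx.2)
        (norm_nonneg _)
    · simp [image_eq_zero_of_notMem_tsupport hw]
  · exact (hasChar_iff_tendsto_cobounded.1 ((hchar (p - w)).comp_sub_const w)).const_smul (ρ w)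

/-- character is invariant under convolution with a compactly supported
probability density. If `v` is continuous with character `c` and `ρ : ℝ² → ℝ` is a
nonnegative, compactly supported, integrable function of total integral 1, then
`(v ∗ ρ)(z) = ∫ v(z − w)·ρ(w) dw` also has character `c`. -/
theorem char_invariant_under_convolution
    (v : ℂ → ℂ) (hv : Continuous v) (c : ℂ) (hchar : ∀ p, HasChar v p c)
    (ρ : ℂ → ℝ) (hρ0 : ∀ w, 0 ≤ ρ w) (hρcs : HasCompactSupport ρ)
    (hρint : Integrable ρ) (hρ1 : (∫ w : ℂ, ρ w) = 1)
    (vρ : ℂ → ℂ) (hvρ : ∀ z, vρ z = ∫ w : ℂ, ρ w • v (z - w)) :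
    ∀ p, HasChar vρ p c :=
  char_invariant_under_convolution_general v hv c hchar ρ hρcs hρint hρ1 vρ hvρ
end
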